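/- Let m ≥ 1 and h ≥ 1 be natural numbers and let A be an m×m complex matrix. Then the spectrum of the block matrix M(A,h) over ℂ is exactly the set of h-th roots of elements of the spectrum of A: spectrum ℂ (M(A,h)) = { μ ∈ ℂ | μ^h ∈ spectrum ℂ A }. -/

import Mathlib

open Matrix

/-- The block matrix `M(A,h)` with `A` in the top-right block, identity blocks
on the first block subdiagonal, and zero blocks elsewhere. -/
def liftBlock {m : ℕ} (h : ℕ) (A : Matrix (Fin m) (Fin m) ℂ) :
    Matrix (Fin h × Fin m) (Fin h × Fin m) ℂ :=
  fun p q =>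
    if p.1.val = 0 ∧ q.1.val = h - 1 then A p.2 q.2
    else if p.1.val = q.1.val + 1 then (if p.2 = q.2 then 1 else 0)
    else 0

/-
An eigenvector `v` of `M(A, h)` for `μ` satisfies `v_{i-1} = μ • v_i` between consecutive blocks,
so it is determined by its last block `w` as `v_i = μ ^ (h - 1 - i) • w`; the first block row of
`M(A, h) v = μ v` then says exactly `A w = μ ^ h • w`, and conversely every such `w` stacks up
to an eigenvector of `M(A, h)`.
-/

theorem Matrix.mem_spectrum_iff_exists_mulVec_eq_smul {K n : Type*} [Field K] [Fintype n]
    [DecidableEq n] (B : Matrix n n K) (μ : K) :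
    μ ∈ spectrum K B ↔ ∃ v ≠ 0, B *ᵥ v = μ • v := by
  simp only [← spectrum_toLin', ← Module.End.hasEigenvalue_iff_mem_spectrum,
    Module.End.hasEigenvalue_iff, Submodule.ne_bot_iff, Module.End.mem_eigenspace_iff,
    toLin'_apply]
  exact ⟨fun ⟨v, hv, h0⟩ => ⟨v, h0, hv⟩, fun ⟨v, h0, hv⟩ => ⟨v, hv, h0⟩⟩

section
variable {m n : ℕ}

theorem liftBlock_mulVec_zero (A : Matrix (Fin m) (Fin m) ℂ) (v : Fin (n + 1) × Fin m → ℂ)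
    (k : Fin m) :
    (liftBlock (n + 1) A *ᵥ v) (0, k) = (A *ᵥ fun l => v (Fin.last n, l)) k := by
  simp only [mulVec, dotProduct, Fintype.sum_prod_type, liftBlock]
  rw [Finset.sum_eq_single (Fin.last n)]
  · simp
  · intro j _ hj
    have : (j : ℕ) ≠ n := fun e => hj (Fin.ext e)
    simp [this]
  · simp

theorem liftBlock_mulVec_succ (A : Matrix (Fin m) (Fin m) ℂ) (v : Fin (n + 1) × Fin m → ℂ)
    (i : Fin n) (k : Fin m) :
    (liftBlock (n + 1) A *ᵥ v) (i.succ, k) = v (i.castSucc, k) := by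
  simp only [mulVec, dotProduct, Fintype.sum_prod_type, liftBlock]
  rw [Finset.sum_eq_single i.castSucc, Finset.sum_eq_single k]
  · simp
  · intro l _ hl
    simp [Ne.symm hl]
  · simp
  · intro j _ hj
    have : (i : ℕ) ≠ j := fun e => hj (Fin.ext e.symm)
    simp [this]
  · simp

def powerStack (μ : ℂ) (w : Fin m → ℂ) : Fin (n + 1) × Fin m → ℂ :=
  fun p => μ ^ (n - p.1) * w p.2

theorem powerStack_eq_zero_iff (μ : ℂ) (w : Fin m → ℂ) :
    powerStack (n := n) μ w = 0 ↔ w = 0 := by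
  refine ⟨fun h => funext fun k => ?_, fun h => by subst h; funext p; simp [powerStack]⟩
  simpa [powerStack] using congrFun h (Fin.last n, k)

theorem eq_powerStack_of_liftBlock_mulVec_eq_smul {A : Matrix (Fin m) (Fin m) ℂ}
    {v : Fin (n + 1) × Fin m → ℂ} {μ : ℂ} (hv : liftBlock (n + 1) A *ᵥ v = μ • v) :
    v = powerStack μ (fun l => v (Fin.last n, l)) := by
  suffices ∀ i k, v (i, k) = μ ^ (n - i) * v (Fin.last n, k) from funext fun p => this p.1 p.2
  intro i
  induction i using Fin.reverseInduction with
  | last => simp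
  | cast i ih =>
    intro k
    have hstep := congrFun hv (i.succ, k)
    rw [liftBlock_mulVec_succ, Pi.smul_apply, smul_eq_mul] at hstep
    rw [hstep, ih, ← mul_assoc, ← pow_succ']
    congr 2
    simp only [Fin.val_succ, Fin.val_castSucc]
    omega

theorem liftBlock_mulVec_powerStack_eq_smul_iff (A : Matrix (Fin m) (Fin m) ℂ) (μ : ℂ)
    (w : Fin m → ℂ) :
    liftBlock (n + 1) A *ᵥ powerStack μ w = μ • powerStack μ w ↔ A *ᵥ w = μ ^ (n + 1) • w := by
  have hlast : (fun l => powerStack (n := n) μ w (Fin.last n, l)) = w := by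
    simp [powerStack]
  constructor
  · intro h
    funext k
    have := congrFun h (0, k)
    rw [liftBlock_mulVec_zero, hlast] at this
    simpa [powerStack, pow_succ', mul_assoc] using this
  · intro h
    funext ⟨i, k⟩
    induction i using Fin.cases with
    | zero =>
      rw [liftBlock_mulVec_zero, hlast, h]
      simp [powerStack, pow_succ', mul_assoc]
    | succ i =>
      rw [liftBlock_mulVec_succ]
      simp only [powerStack, Pi.smul_apply, smul_eq_mul, Fin.val_succ, Fin.val_castSucc]
      rw [← mul_assoc, ← pow_succ']
      congr 2
      omega
end

theorem liftBlock_spectrum_general {m h : ℕ} (hh : 1 ≤ h)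
    (A : Matrix (Fin m) (Fin m) ℂ) :
    spectrum ℂ (liftBlock h A) = {μ : ℂ | μ ^ h ∈ spectrum ℂ A} := by
  obtain ⟨n, rfl⟩ := Nat.exists_eq_add_of_le' hh
  ext μ
  simp only [Set.mem_ofPred_eq, mem_spectrum_iff_exists_mulVec_eq_smul]
  constructor
  · rintro ⟨v, hv0, hv⟩
    rw [eq_powerStack_of_liftBlock_mulVec_eq_smul hv] at hv0 hv
    exact ⟨_, mt (powerStack_eq_zero_iff μ _).mpr hv0,
      (liftBlock_mulVec_powerStack_eq_smul_iff A μ _).mp hv⟩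
  · rintro ⟨w, hw0, hw⟩
    exact ⟨powerStack μ w, mt (powerStack_eq_zero_iff μ w).mp hw0,
      (liftBlock_mulVec_powerStack_eq_smul_iff A μ w).mpr hw⟩

theorem liftBlock_spectrum {m h : ℕ} (hm : 1 ≤ m) (hh : 1 ≤ h)
    (A : Matrix (Fin m) (Fin m) ℂ) :
    spectrum ℂ (liftBlock h A) = {μ : ℂ | μ ^ h ∈ spectrum ℂ A} :=
  liftBlock_spectrum_general hh A
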